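/- For every positive integer j ≥ 1, in the graded ring ℂ[H_0,…,H_d]/(H_0⁴, H_1⁴(-H_0+2H_1-H_2), …, H_{d-1}⁴(-H_{d-2}+2H_{d-1}-H_d), H_d⁴) with d ≥ j+1, the relation H_0³H_1⁴⋯H_{j-1}⁴H_j⁵ = (j/(j+1))·H_0³H_1⁴⋯H_j⁴H_{j+1} holds. -/

import Mathlib

open MvPolynomial Finset
open Fin.NatCast

noncomputable def chowIdealD (d : ℕ) : Ideal (MvPolynomial (Fin (d + 1)) ℂ) :=
  Ideal.span ({X (0 : Fin (d + 1)) ^ 4, X (d : Fin (d + 1)) ^ 4} ∪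
    {p | ∃ i : ℕ, 1 ≤ i ∧ i ≤ d - 1 ∧
      p = X (i : Fin (d + 1)) ^ 4 *
        (-X ((i - 1 : ℕ) : Fin (d + 1)) + 2 * X (i : Fin (d + 1))
          - X ((i + 1 : ℕ) : Fin (d + 1)))})

/-!
Multiplying the relation `H_j⁴ (-H_{j-1} + 2H_j - H_{j+1}) = 0` by `P_{j-1} = H_0³ H_1⁴ ⋯ H_{j-1}⁴`
gives `2 P_{j-1} H_j⁵ = P_{j-1} H_{j-1} H_j⁴ + P_j H_{j+1}`. The middle term is `H_j⁴` times the
left-hand side of the claim for `j - 1` (and vanishes for `j = 1` since `H_0⁴ = 0`), so by induction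
`(j+1) P_{j-1} H_j⁵ = j P_j H_{j+1}`.
-/

section Sequence

variable {A : Type*} [CommRing A]

def prefixMonomial (h : ℕ → A) (k : ℕ) : A :=
  h 0 ^ 3 * ∏ i ∈ Icc 1 k, h i ^ 4

theorem prefixMonomial_zero (h : ℕ → A) : prefixMonomial h 0 = h 0 ^ 3 := by
  simp [prefixMonomial]

theorem prefixMonomial_succ (h : ℕ → A) (k : ℕ) :
    prefixMonomial h (k + 1) = prefixMonomial h k * h (k + 1) ^ 4 := by
  rw [prefixMonomial, prefixMonomial, prod_Icc_succ_top (by omega), mul_assoc]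

variable {h : ℕ → A} {n : ℕ}

theorem add_two_mul_prefixMonomial_mul_pow_five (h0 : h 0 ^ 4 = 0)
    (hrel : ∀ i, 1 ≤ i → i ≤ n → h i ^ 4 * (-h (i - 1) + 2 * h i - h (i + 1)) = 0)
    {k : ℕ} (hk : k + 1 ≤ n) :
    ((k : A) + 2) * (prefixMonomial h k * h (k + 1) ^ 5)
      = ((k : A) + 1) * (prefixMonomial h (k + 1) * h (k + 2)) := by
  induction k with
  | zero =>
    have rel := hrel 1 le_rfl hk
    simp only [prefixMonomial_succ, prefixMonomial_zero, Nat.cast_zero] at rel ⊢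
    linear_combination h 0 ^ 3 * rel + h 1 ^ 4 * h0
  | succ k ih =>
    have rel : h (k + 2) ^ 4 * (-h (k + 1) + 2 * h (k + 2) - h (k + 3)) = 0 :=
      hrel (k + 2) (by omega) hk
    have ih := ih (by omega)
    simp only [prefixMonomial_succ, Nat.cast_succ] at rel ih ⊢
    linear_combination ((k : A) + 2) * prefixMonomial h k * h (k + 1) ^ 4 * rel
      + h (k + 2) ^ 4 * ih

theorem prefixMonomial_mul_pow_five_eq_smul {K : Type*} [Field K] [CharZero K] [Algebra K A]
    (h0 : h 0 ^ 4 = 0)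
    (hrel : ∀ i, 1 ≤ i → i ≤ n → h i ^ 4 * (-h (i - 1) + 2 * h i - h (i + 1)) = 0)
    {j : ℕ} (hj : 1 ≤ j) (hjn : j ≤ n) :
    prefixMonomial h (j - 1) * h j ^ 5
      = ((j : K) / ((j : K) + 1)) • (prefixMonomial h j * h (j + 1)) := by
  obtain ⟨k, rfl⟩ : ∃ k, j = k + 1 := ⟨j - 1, by omega⟩
  have key : ((k : K) + 2) • (prefixMonomial h k * h (k + 1) ^ 5)
      = ((k : K) + 1) • (prefixMonomial h (k + 1) * h (k + 2)) := by
    simpa [Algebra.smul_def, map_ofNat] using add_two_mul_prefixMonomial_mul_pow_five h0 hrel hjn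
  have hne : ((k : K) + 2) ≠ 0 := by exact_mod_cast (k + 1).succ_ne_zero
  calc prefixMonomial h (k + 1 - 1) * h (k + 1) ^ 5
      = ((k : K) + 2)⁻¹ • (((k : K) + 2) • (prefixMonomial h k * h (k + 1) ^ 5)) := by
        rw [smul_smul, inv_mul_cancel₀ hne, one_smul, Nat.add_sub_cancel]
    _ = _ := by
        rw [key, smul_smul]
        congr 1
        push_cast
        ring

end Sequence

theorem stmt17_general (d j : ℕ) (hj : 1 ≤ j) (hjd : j ≤ d - 1) :
    Ideal.Quotient.mk (chowIdealD d)
        (X (0 : Fin (d + 1)) ^ 3 * (∏ i ∈ Icc 1 (j - 1), X (i : Fin (d + 1)) ^ 4) *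
          X (j : Fin (d + 1)) ^ 5)
      = ((j : ℂ) / ((j : ℂ) + 1)) •
        Ideal.Quotient.mk (chowIdealD d)
          (X (0 : Fin (d + 1)) ^ 3 * (∏ i ∈ Icc 1 j, X (i : Fin (d + 1)) ^ 4) *
            X ((j + 1 : ℕ) : Fin (d + 1))) := by
  set h : ℕ → MvPolynomial (Fin (d + 1)) ℂ ⧸ chowIdealD d :=
    fun i => Ideal.Quotient.mk _ (X (i : Fin (d + 1)))
  have h0 : h 0 ^ 4 = 0 := by
    rw [← map_pow, Ideal.Quotient.eq_zero_iff_mem]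
    exact Ideal.subset_span (Or.inl (Set.mem_insert _ _))
  have hrel : ∀ i, 1 ≤ i → i ≤ d - 1 → h i ^ 4 * (-h (i - 1) + 2 * h i - h (i + 1)) = 0 := by
    intro i hi hid
    rw [← map_ofNat (Ideal.Quotient.mk _), ← map_pow, ← map_neg, ← map_mul, ← map_add, ← map_sub,
      ← map_mul, Ideal.Quotient.eq_zero_iff_mem]
    exact Ideal.subset_span (Or.inr ⟨i, hi, hid, rfl⟩)
  simpa [prefixMonomial, h] using prefixMonomial_mul_pow_five_eq_smul (K := ℂ) h0 hrel hj hjd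

theorem stmt17 (d j : ℕ) (hd : 2 ≤ d) (hj : 1 ≤ j) (hjd : j ≤ d - 1) :
    Ideal.Quotient.mk (chowIdealD d)
        (X (0 : Fin (d + 1)) ^ 3 * (∏ i ∈ Icc 1 (j - 1), X (i : Fin (d + 1)) ^ 4) *
          X (j : Fin (d + 1)) ^ 5)
      = ((j : ℂ) / ((j : ℂ) + 1)) •
        Ideal.Quotient.mk (chowIdealD d)
          (X (0 : Fin (d + 1)) ^ 3 * (∏ i ∈ Icc 1 j, X (i : Fin (d + 1)) ^ 4) *
            X ((j + 1 : ℕ) : Fin (d + 1))) :=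
  stmt17_general d j hj hjd
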